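/- If G is interval colorable, then the chromatic index of G equals its maximum degree Δ(G). -/

import Mathlib

/-- The set of colors on edges incident to `v` (the spectrum of `v`). -/
def Spectrum {V : Type*} (G : SimpleGraph V) (c : G.edgeSet → ℕ) (v : V) : Set ℕ :=
  {k | ∃ e : G.edgeSet, v ∈ (e : Sym2 V) ∧ c e = k}

/-- `c` is an interval `t`-coloring of `G`: a proper edge-coloring with colors
`1,…,t`, all colors used, and each vertex's spectrum an interval of integers. -/
def IsIntervalColoring {V : Type*} (G : SimpleGraph V) (t : ℕ) (c : G.edgeSet → ℕ) : Prop :=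
  (∀ e, 1 ≤ c e ∧ c e ≤ t) ∧
  (∀ k, 1 ≤ k → k ≤ t → ∃ e, c e = k) ∧
  (∀ e₁ e₂ : G.edgeSet, e₁ ≠ e₂ → (∃ v, v ∈ (e₁ : Sym2 V) ∧ v ∈ (e₂ : Sym2 V)) →
    c e₁ ≠ c e₂) ∧
  (∀ v : V, ∃ a b : ℕ, Spectrum G c v = Set.Icc a b)

/-- Which part of the tripartition a vertex belongs to. -/
def tripart (m n : ℕ) : Fin 1 ⊕ Fin m ⊕ Fin n → Fin 3
  | .inl _ => 0
  | .inr (.inl _) => 1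
  | .inr (.inr _) => 2

/-- The complete tripartite graph `K_{1,m,n}`. -/
def K1mn (m n : ℕ) : SimpleGraph (Fin 1 ⊕ Fin m ⊕ Fin n) where
  Adj a b := tripart m n a ≠ tripart m n b
  symm := ⟨fun _ _ h => h.symm⟩
  loopless := ⟨fun _ h => h rfl⟩

/-!
Reducing the colors of an interval coloring modulo `Δ(G)` gives a proper coloring with
`Δ(G)` colors: the colors at a vertex `v` form an interval of at most `deg v ≤ Δ(G)`
consecutive integers, so they stay pairwise distinct modulo `Δ(G)`. Conversely, the edges at
a vertex of maximum degree need `Δ(G)` distinct colors in any proper edge-coloring.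
-/

namespace SimpleGraph

variable {V : Type*} {G : SimpleGraph V}

def IsProperEdgeColoring (G : SimpleGraph V) (c : G.edgeSet → ℕ) : Prop :=
  ∀ e₁ e₂ : G.edgeSet, e₁ ≠ e₂ → (∃ v, v ∈ (e₁ : Sym2 V) ∧ v ∈ (e₂ : Sym2 V)) → c e₁ ≠ c e₂

lemma ncard_incidenceSet_eq_degree [Fintype V] [DecidableRel G.Adj] (v : V) :
    (G.incidenceSet v).ncard = G.degree v := by
  classical
  rw [← Nat.card_coe_set_eq, Nat.card_eq_fintype_card, card_incidenceSet_eq_degree]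

lemma degree_le_of_isProperEdgeColoring [Fintype V] [DecidableRel G.Adj] {c : G.edgeSet → ℕ}
    {k : ℕ} (hrange : ∀ e, 1 ≤ c e ∧ c e ≤ k) (hc : IsProperEdgeColoring G c) (v : V) :
    G.degree v ≤ k := by
  let color (e : G.incidenceSet v) : Set.Icc 1 k := ⟨c ⟨e, e.2.1⟩, hrange _⟩
  have hinj : Function.Injective color := fun e₁ e₂ heq ↦ by
    by_contra hne
    exact hc _ _ (fun h ↦ hne <| Subtype.ext <| congrArg (Subtype.val : G.edgeSet → Sym2 V) h)
      ⟨v, e₁.2.2, e₂.2.2⟩ (Subtype.ext_iff.mp heq)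
  have := Nat.card_le_card_of_injective color hinj
  rwa [Nat.card_coe_set_eq, Nat.card_coe_set_eq, ncard_incidenceSet_eq_degree, Set.ncard_Icc_nat,
    Nat.add_sub_cancel] at this

lemma maxDegree_le_of_isProperEdgeColoring [Fintype V] [DecidableRel G.Adj]
    {c : G.edgeSet → ℕ} {k : ℕ} (hrange : ∀ e, 1 ≤ c e ∧ c e ≤ k)
    (hc : IsProperEdgeColoring G c) : G.maxDegree ≤ k :=
  G.maxDegree_le_of_forall_degree_le k (degree_le_of_isProperEdgeColoring hrange hc)

lemma spectrum_eq_range (c : G.edgeSet → ℕ) (v : V) :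
    Spectrum G c v = Set.range fun e : G.incidenceSet v ↦ c ⟨e, e.2.1⟩ := by
  ext k
  exact ⟨fun ⟨e, hv, he⟩ ↦ ⟨⟨e, e.2, hv⟩, he⟩, fun ⟨e, he⟩ ↦ ⟨⟨e, e.2.1⟩, e.2.2, he⟩⟩

lemma ncard_spectrum_le_degree [Fintype V] [DecidableRel G.Adj] (c : G.edgeSet → ℕ)
    (v : V) : (Spectrum G c v).ncard ≤ G.degree v := by
  rw [spectrum_eq_range, ← ncard_incidenceSet_eq_degree]
  exact Finite.card_range_le _

lemma maxDegree_pos_of_edge [Fintype V] [DecidableRel G.Adj] (e : G.edgeSet) :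
    0 < G.maxDegree := by
  obtain ⟨e, he⟩ := e
  induction e using Sym2.ind with
  | h u w =>
    exact ((G.degree_pos_iff_exists_adj u).2 ⟨w, he⟩).trans_le (G.degree_le_maxDegree u)

end SimpleGraph

open SimpleGraph

namespace IsIntervalColoring

variable {V : Type*} {G : SimpleGraph V} {t : ℕ} {c : G.edgeSet → ℕ}

lemma isProperEdgeColoring (hc : IsIntervalColoring G t c) : IsProperEdgeColoring G c :=
  hc.2.2.1

lemma isProperEdgeColoring_mod_maxDegree [Fintype V] [DecidableRel G.Adj]
    (hc : IsIntervalColoring G t c) :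
    IsProperEdgeColoring G fun e ↦ c e % G.maxDegree + 1 := by
  rintro e₁ e₂ hne ⟨v, hv₁, hv₂⟩ hmod
  obtain ⟨a, b, hspec⟩ := hc.2.2.2 v
  have hlen : b + 1 - a ≤ G.maxDegree := calc
    b + 1 - a = (Spectrum G c v).ncard := by rw [hspec, Set.ncard_Icc_nat]
    _ ≤ G.degree v := ncard_spectrum_le_degree c v
    _ ≤ G.maxDegree := G.degree_le_maxDegree v
  have h₁ : c e₁ ∈ Set.Icc a b := hspec ▸ ⟨e₁, hv₁, rfl⟩
  have h₂ : c e₂ ∈ Set.Icc a b := hspec ▸ ⟨e₂, hv₂, rfl⟩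
  refine hc.isProperEdgeColoring e₁ e₂ hne ⟨v, hv₁, hv₂⟩
    (Nat.ModEq.eq_of_abs_lt (m := G.maxDegree) ?_ ?_)
  · exact Nat.succ_injective hmod
  · rw [abs_sub_lt_iff]
    simp only [Set.mem_Icc] at h₁ h₂
    omega

end IsIntervalColoring

open scoped Classical in
theorem stmt_15 {V : Type*} [Fintype V] (G : SimpleGraph V) [DecidableRel G.Adj]
    (h : ∃ (t : ℕ) (c : G.edgeSet → ℕ), 0 < t ∧ IsIntervalColoring G t c) :
    sInf {k : ℕ | ∃ c : G.edgeSet → ℕ, (∀ e, 1 ≤ c e ∧ c e ≤ k) ∧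
        ∀ e₁ e₂ : G.edgeSet, e₁ ≠ e₂ →
          (∃ v, v ∈ (e₁ : Sym2 V) ∧ v ∈ (e₂ : Sym2 V)) → c e₁ ≠ c e₂}
      = G.maxDegree := by
  obtain ⟨t, c, -, hc⟩ := h
  have hcolorable : G.maxDegree ∈ {k : ℕ | ∃ c : G.edgeSet → ℕ, (∀ e, 1 ≤ c e ∧ c e ≤ k) ∧
      IsProperEdgeColoring G c} :=
    ⟨_, fun e ↦ ⟨le_add_self, Nat.mod_lt _ (maxDegree_pos_of_edge e)⟩,
      hc.isProperEdgeColoring_mod_maxDegree⟩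
  exact le_antisymm (Nat.sInf_le hcolorable)
    (le_csInf ⟨_, hcolorable⟩ fun _ ⟨_, hrange, hproper⟩ ↦
      maxDegree_le_of_isProperEdgeColoring hrange hproper)
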